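/- arXiv:2306.16278 — 2 statements merged into one kernel-verified Lean document; each statement's English description precedes it below -/
import Mathlib

section
/- Let (X, d, μ) be a separable metric probability space. A point u ∈ X satisfies: there exists a null sequence (r_n) with liminf_{n→∞} μ(B(u,r_n))/M_{r_n} ≥ 1 (i.e. u is a partial strong mode), if and only if for every sequence u_n → u there exists a null sequence (r_n) with liminf_{n→∞} μ(B(u_n,r_n))/M_{r_n} ≥ 1. -/
open MeasureTheory Metric Filter Topology

/-- Ball-mass ratio with the conventions `c/0 = ∞` for `c > 0` and `0/0 = 1`. -/
noncomputable def mRatio (a b : ENNReal) : ENNReal :=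
  if b = 0 then (if a = 0 then 1 else ⊤) else a / b

/-!
Fix `c < 1`. Since `u` is a partial strong mode, there are arbitrarily small radii `ρ` with
`c * M_ρ < μ (ball u ρ)`, and by continuity of measure from below this survives shrinking the
ball to `ball u ρ'` with `ρ' < ρ`. Any `v` with `dist v u < ρ - ρ'` has `ball v ρ ⊇ ball u ρ'`,
so `c ≤ μ (ball v ρ) / M_ρ`. Choosing such pairs `(ρₖ, ρ'ₖ)` for `cₖ ↑ 1` and letting the index `k`
grow slowly enough along `uₙ → u` gives the required null sequence for `(uₙ)`.
-/

lemma le_mRatio {a b c : ENNReal} (hb₀ : b ≠ 0) (hb : b ≠ ⊤) (h : c * b ≤ a) :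
    c ≤ mRatio a b := by
  rw [mRatio, if_neg hb₀]
  exact (ENNReal.le_div_iff_mul_le (.inl hb₀) (.inl hb)).mpr h

lemma mul_lt_of_lt_mRatio {a b c : ENNReal} (hb₀ : b ≠ 0) (hb : b ≠ ⊤) (h : c < mRatio a b) :
    c * b < a := by
  rw [mRatio, if_neg hb₀] at h
  exact (ENNReal.lt_div_iff_mul_lt (.inl hb₀) (.inl hb)).mp h

lemma exists_tendsto_atTop_eventually_of_forall_eventually {P : ℕ → ℕ → Prop}
    (h : ∀ k, ∀ᶠ m in atTop, P k m) :
    ∃ K : ℕ → ℕ, Tendsto K atTop atTop ∧ ∀ᶠ m in atTop, P (K m) m := by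
  classical
  let Q m k := ∀ j ≤ k, P j m
  have hQ : ∀ k, ∀ᶠ m in atTop, Q m k := fun k =>
    (eventually_all_finite (Set.finite_Iic k)).mpr fun j _ => h j
  refine ⟨fun m => Nat.findGreatest (Q m) m, tendsto_atTop.mpr fun k => ?_, ?_⟩
  · filter_upwards [hQ k, eventually_ge_atTop k] with m hm hkm
    exact Nat.le_findGreatest hkm hm
  · filter_upwards [hQ 0] with m hm
    exact Nat.findGreatest_spec (Nat.zero_le m) hm _ le_rfl

section Measure

variable {X : Type*} [PseudoMetricSpace X] [MeasurableSpace X] {μ : Measure X}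

lemma iSup_measure_ball_ne_zero [TopologicalSpace.SeparableSpace X] [NeZero μ]
    {ρ : ℝ} (hρ : 0 < ρ) : (⨆ x, μ (ball x ρ)) ≠ 0 := by
  obtain ⟨D, hD, hDdense⟩ := TopologicalSpace.exists_countable_dense X
  intro h
  have hball : ∀ x, μ (ball x ρ) = 0 := fun x =>
    nonpos_iff_eq_zero.mp (h ▸ le_iSup (fun x => μ (ball x ρ)) x)
  refine NeZero.ne μ (Measure.measure_univ_eq_zero.mp (measure_mono_null ?_
    ((measure_biUnion_null_iff hD).mpr fun x _ => hball x)))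
  rw [(dense_iff_iUnion_ball D).mp hDdense ρ hρ]

lemma iSup_measure_ball_ne_top [IsFiniteMeasure μ] (ρ : ℝ) : (⨆ x, μ (ball x ρ)) ≠ ⊤ :=
  ne_top_of_le_ne_top (measure_ne_top μ Set.univ)
    (iSup_le fun _ => measure_mono (Set.subset_univ _))

lemma exists_lt_measure_ball_of_lt {a : ENNReal} {x : X} {ρ : ℝ} (h : a < μ (ball x ρ)) :
    ∃ ρ' < ρ, a < μ (ball x ρ') := by
  have hmono : Monotone fun ρ' : Set.Iio ρ => ball x ρ' := fun _ _ h => ball_subset_ball h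
  have hunion : ⋃ ρ' : Set.Iio ρ, ball x ρ' = ball x ρ := by
    rw [Set.iUnion_subtype, ← biUnion_lt_ball]
    rfl
  rw [← hunion, hmono.measure_iUnion] at h
  obtain ⟨⟨ρ', hρ'⟩, h⟩ := lt_iSup_iff.mp h
  exact ⟨ρ', hρ', h⟩

/-- A partial strong mode `u` of `μ` is exactly one for which `fun _ => u` has this property. -/
def IsPartialStrongModeSeq (μ : Measure X) (v : ℕ → X) : Prop :=
  ∃ r : ℕ → ℝ, (∀ n, 0 < r n) ∧ Tendsto r atTop (𝓝 0) ∧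
    1 ≤ liminf (fun n => mRatio (μ (ball (v n) (r n))) (⨆ x : X, μ (ball x (r n)))) atTop

variable [TopologicalSpace.SeparableSpace X] [IsFiniteMeasure μ] [NeZero μ]

lemma IsPartialStrongModeSeq.exists_mul_iSup_le_measure_ball {u : X}
    (h : IsPartialStrongModeSeq μ fun _ => u) {c : ENNReal} (hc : c < 1) {δ : ℝ} (hδ : 0 < δ) :
    ∃ ρ ρ' : ℝ, 0 < ρ ∧ ρ ≤ δ ∧ ρ' < ρ ∧ c * (⨆ x, μ (ball x ρ)) ≤ μ (ball u ρ') := by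
  obtain ⟨r, hr, hr0, hlim⟩ := h
  obtain ⟨n, hn, hnδ⟩ :=
    ((eventually_lt_of_lt_liminf (hc.trans_le hlim)).and (hr0.eventually (gt_mem_nhds hδ))).exists
  obtain ⟨ρ', hρ', hmass⟩ := exists_lt_measure_ball_of_lt
    (mul_lt_of_lt_mRatio (iSup_measure_ball_ne_zero (hr n)) (iSup_measure_ball_ne_top _) hn)
  exact ⟨r n, ρ', hr n, hnδ.le, hρ', hmass.le⟩

lemma IsPartialStrongModeSeq.of_tendsto {u : X} (h : IsPartialStrongModeSeq μ fun _ => u)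
    {us : ℕ → X} (hus : Tendsto us atTop (𝓝 u)) : IsPartialStrongModeSeq μ us := by
  obtain ⟨c, -, hc1, hc⟩ := exists_seq_strictMono_tendsto' (zero_lt_one' ENNReal)
  choose ρ ρ' hρ hρδ hρ' hmass using fun k : ℕ =>
    h.exists_mul_iSup_le_measure_ball (hc1 k).2 (Nat.one_div_pos_of_nat (n := k))
  obtain ⟨K, hK, hclose⟩ := exists_tendsto_atTop_eventually_of_forall_eventually fun k =>
    (tendsto_iff_dist_tendsto_zero.mp hus).eventually (gt_mem_nhds (sub_pos.mpr (hρ' k)))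
  refine ⟨ρ ∘ K, fun m => hρ _, ?_, ?_⟩
  · exact squeeze_zero (fun m => (hρ _).le) (fun m => hρδ _)
      (tendsto_one_div_add_atTop_nhds_zero_nat.comp hK)
  · calc 1 = liminf (c ∘ K) atTop := ((hc.comp hK).liminf_eq).symm
      _ ≤ _ := liminf_le_liminf ?_
    filter_upwards [hclose] with m hm
    have hsub : ball u (ρ' (K m)) ⊆ ball (us m) (ρ (K m)) :=
      ball_subset_ball' (by rw [dist_comm]; linarith)
    exact le_mRatio (iSup_measure_ball_ne_zero (hρ _)) (iSup_measure_ball_ne_top _)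
      ((hmass _).trans (measure_mono hsub))

end Measure

theorem stmt7_general {X : Type*} [MetricSpace X] [TopologicalSpace.SeparableSpace X]
    [MeasurableSpace X] (μ : Measure X) [IsProbabilityMeasure μ]
    (u : X) :
    (∃ r : ℕ → ℝ, (∀ n, 0 < r n) ∧ Tendsto r atTop (𝓝 0) ∧
        1 ≤ Filter.liminf
          (fun n => mRatio (μ (ball u (r n))) (⨆ x : X, μ (ball x (r n)))) atTop)
    ↔ ∀ us : ℕ → X, Tendsto us atTop (𝓝 u) →
        ∃ r : ℕ → ℝ, (∀ n, 0 < r n) ∧ Tendsto r atTop (𝓝 0) ∧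
          1 ≤ Filter.liminf
            (fun n => mRatio (μ (ball (us n) (r n))) (⨆ x : X, μ (ball x (r n)))) atTop :=
  ⟨fun h _ hus => IsPartialStrongModeSeq.of_tendsto h hus, fun h => h _ tendsto_const_nhds⟩

theorem stmt7 {X : Type*} [MetricSpace X] [TopologicalSpace.SeparableSpace X]
    [MeasurableSpace X] [BorelSpace X] (μ : Measure X) [IsProbabilityMeasure μ]
    (u : X) :
    (∃ r : ℕ → ℝ, (∀ n, 0 < r n) ∧ Tendsto r atTop (𝓝 0) ∧
        1 ≤ Filter.liminf
          (fun n => mRatio (μ (ball u (r n))) (⨆ x : X, μ (ball x (r n)))) atTop)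
    ↔ ∀ us : ℕ → X, Tendsto us atTop (𝓝 u) →
        ∃ r : ℕ → ℝ, (∀ n, 0 < r n) ∧ Tendsto r atTop (𝓝 0) ∧
          1 ≤ Filter.liminf
            (fun n => mRatio (μ (ball (us n) (r n))) (⨆ x : X, μ (ball x (r n)))) atTop :=
  stmt7_general μ u
end

section
/- Let (X, d, μ) be a separable metric probability space and suppose v is a partial strong mode along the null sequence (r_n), i.e. liminf_{n→∞} μ(B(v,r_n))/M_{r_n} ≥ 1. Then every weak mode u of μ is also a partial strong mode along the same null sequence (r_n). -/
/-! For `u ≠ v`, the weak-mode property of `u` restricted to the null sequence gives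
`liminf μ(B(u,rₙ))/μ(B(v,rₙ)) ≥ 1`. Multiplying by `μ(B(v,rₙ))/M_{rₙ}`, whose liminf is `≥ 1`,
gives at most `μ(B(u,rₙ))/M_{rₙ}`: the ratio telescopes, and its `c/0` and `0/0` conventions never
make the product exceed the ratio of the ends. -/

open MeasureTheory Metric Filter Topology

lemma ENNReal.div_mul_div_le (a b c : ENNReal) : a / b * (b / c) ≤ a / c := by
  rcases eq_or_ne b 0 with rfl | hb0
  · simp
  rcases eq_or_ne b ⊤ with rfl | hbt
  · simp
  rw [div_eq_mul_inv, div_eq_mul_inv, div_eq_mul_inv, mul_assoc, ← mul_assoc b⁻¹,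
    ENNReal.inv_mul_cancel hb0 hbt, one_mul]

lemma mRatio_mul_mRatio_le (a b c : ENNReal) : mRatio a b * mRatio b c ≤ mRatio a c := by
  unfold mRatio
  rcases eq_or_ne c 0 with rfl | hc
  · rcases eq_or_ne b 0 with rfl | hb
    · simp
    rcases eq_or_ne a 0 with rfl | ha <;> simp [*]
  rcases eq_or_ne b 0 with rfl | hb
  · simp [hc]
  simpa [hb, hc] using ENNReal.div_mul_div_le a b c

theorem stmt10_general {X : Type*} [MetricSpace X]
    [MeasurableSpace X] (μ : Measure X)
    (u v : X) (r : ℕ → ℝ) (hrpos : ∀ n, 0 < r n) (hr : Tendsto r atTop (𝓝 0))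
    (hv : 1 ≤ Filter.liminf
        (fun n => mRatio (μ (ball v (r n))) (⨆ x : X, μ (ball x (r n)))) atTop)
    (hu : ∀ w : X, w ≠ u →
        1 ≤ Filter.liminf
          (fun s : ℝ => mRatio (μ (ball u s)) (μ (ball w s))) (𝓝[>] (0:ℝ))) :
    1 ≤ Filter.liminf
      (fun n => mRatio (μ (ball u (r n))) (⨆ x : X, μ (ball x (r n)))) atTop := by
  rcases eq_or_ne v u with rfl | hvu
  · exact hv
  have hr' : Tendsto r atTop (𝓝[>] 0) :=
    tendsto_nhdsWithin_of_tendsto_nhds_of_eventually_within r hr (.of_forall hrpos)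
  have huv : 1 ≤ liminf (fun n => mRatio (μ (ball u (r n))) (μ (ball v (r n)))) atTop :=
    (hu v hvu).trans hr'.liminf_le_liminf_comp
  calc (1 : ENNReal) = 1 * 1 := (one_mul 1).symm
    _ ≤ _ := mul_le_mul' huv hv
    _ ≤ _ := ENNReal.le_liminf_mul
    _ ≤ _ := liminf_le_liminf (.of_forall fun n => mRatio_mul_mRatio_le _ _ _)

theorem stmt10 {X : Type*} [MetricSpace X] [TopologicalSpace.SeparableSpace X]
    [MeasurableSpace X] [BorelSpace X] (μ : Measure X) [IsProbabilityMeasure μ]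
    (u v : X) (r : ℕ → ℝ) (hrpos : ∀ n, 0 < r n) (hr : Tendsto r atTop (𝓝 0))
    (hv : 1 ≤ Filter.liminf
        (fun n => mRatio (μ (ball v (r n))) (⨆ x : X, μ (ball x (r n)))) atTop)
    (hu : ∀ w : X, w ≠ u →
        1 ≤ Filter.liminf
          (fun s : ℝ => mRatio (μ (ball u s)) (μ (ball w s))) (𝓝[>] (0:ℝ))) :
    1 ≤ Filter.liminf
      (fun n => mRatio (μ (ball u (r n))) (⨆ x : X, μ (ball x (r n)))) atTop :=
  stmt10_general μ u v r hrpos hr hv hu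
end
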